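/- (Lemma 3.2(ii)–(iii), decrease and limit value of the reduced merit function) Let K, I* be as in the stable-support property, set δ^k_i = √(ε^k_i), and define the reduced merit function ψ(x_{I*}, y_{I*}, δ_{I*}) = f(x) + λ Σ_{i∈I*} (|x_i| + δ_i²)^p + (β/2) Σ_{i∈I*} (x_i − y_i)², where x has components x_i for i ∈ I* and x_i = 0 for i ∉ I*. Then with D₂ = β(1 − ᾱ²)/2 > 0, the sequence {ψ(x^k_{I*}, x^{k−1}_{I*}, δ^k_{I*})} is monotonically decreasing with ψ(x^k_{I*}, x^{k−1}_{I*}, δ^k_{I*}) − ψ(x^{k+1}_{I*}, x^k_{I*}, δ^{k+1}_{I*}) ≥ D₂ ‖x^k_{I*} − x^{k−1}_{I*}‖₂² for all sufficiently large k; it converges to a limit ζ, and ψ(x*_{I*}, x*_{I*}, 0_{I*}) = ζ for every cluster point x* of {x^k}. -/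

import Mathlib

open Filter
open scoped BigOperators InnerProductSpace

noncomputable section

/-- Real n-dimensional Euclidean space. -/
abbrev Vec (n : ℕ) := EuclideanSpace ℝ (Fin n)

/-- The smoothed objective `F(x, ε) = f(x) + λ ∑ᵢ (|xᵢ| + εᵢ)^p`. -/
def Fobj (n : ℕ) (p lam : ℝ) (f : Vec n → ℝ) (z : Vec n) (ε : Fin n → ℝ) : ℝ :=
  f z + lam * ∑ i, (|z i| + ε i) ^ p

/-- The merit function `ψ(x, y, ε) = F(x, ε) + (β/2)‖x − y‖²`. -/
def psiObj (n : ℕ) (p lam β : ℝ) (f : Vec n → ℝ) (z y : Vec n) (ε : Fin n → ℝ) : ℝ :=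
  Fobj n p lam f z ε + β / 2 * ‖z - y‖ ^ 2

/-- The weighted-ℓ₁ subproblem objective at iteration `k`:
`⟨∇f(yₖ), z⟩ + (β/2)‖z − yₖ‖² + λ ∑ᵢ wᵢᵏ |zᵢ|` with `wᵢᵏ = p(|xᵢᵏ| + εᵢᵏ)^{p−1}`. -/
def subObj (n : ℕ) (p lam β : ℝ) (f : Vec n → ℝ) (xk yk : Vec n) (εk : Fin n → ℝ)
    (z : Vec n) : ℝ :=
  ⟪gradient f yk, z⟫_ℝ + β / 2 * ‖z - yk‖ ^ 2
    + lam * ∑ i, (p * (|xk i| + εk i) ^ (p - 1)) * |z i|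

/-- All the hypotheses of the EIRL1 algorithm (Algorithm 1) together with
Assumption 2.1.  The convention `x⁻¹ = x⁰` is encoded through truncated
subtraction on ℕ (`x (k-1) = x 0` for `k = 0`). -/
structure EIRL1 (n : ℕ) (p lam β Lf μ αbar : ℝ) (f : Vec n → ℝ)
    (x y : ℕ → Vec n) (ε : ℕ → Fin n → ℝ) (α : ℕ → ℝ) : Prop where
  hn : 1 ≤ n
  hp0 : 0 < p
  hp1 : p < 1
  hlam : 0 < lam
  hμ0 : 0 < μ
  hμ1 : μ < 1
  hLf : 0 ≤ Lf
  hβ : Lf < β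
  hconv : ConvexOn ℝ Set.univ f
  hdiff : ContDiff ℝ 1 f
  hlip : ∀ a b, ‖gradient f a - gradient f b‖ ≤ Lf * ‖a - b‖
  hαbar0 : 0 ≤ αbar
  hαbar1 : αbar < 1
  hα0 : ∀ k, 0 ≤ α k
  hα1 : ∀ k, α k ≤ αbar
  hε0 : ∀ i, 0 < ε 0 i
  hεpos : ∀ k i, 0 < ε (k + 1) i
  hεdec : ∀ k i, ε (k + 1) i ≤ μ * ε k i
  hy : ∀ k, y k = x k + α k • (x k - x (k - 1))
  hmin : ∀ k z, z ≠ x (k + 1) →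
    subObj n p lam β f (x k) (y k) (ε k) (x (k + 1)) < subObj n p lam β f (x k) (y k) (ε k) z
  hlevel : Bornology.IsBounded {z : Vec n | Fobj n p lam f z 0 ≤ Fobj n p lam f (x 0) (ε 0)}

/-- Index type for the triple `(x_{I*}, y_{I*}, δ_{I*})` of reduced variables. -/
abbrev Idx3 {n : ℕ} (Istar : Finset (Fin n)) :=
  ({i // i ∈ Istar} ⊕ ({i // i ∈ Istar} ⊕ {i // i ∈ Istar}))

/-- Embedding of a reduced vector into `ℝⁿ`, filling coordinates outside `I*` with `0`. -/
def embedI {n : ℕ} (Istar : Finset (Fin n)) (u : {i // i ∈ Istar} → ℝ) : Vec n :=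
  WithLp.toLp 2 (fun i => if h : i ∈ Istar then u ⟨i, h⟩ else 0)

/-- The reduced merit function
`ψ(x_{I*}, y_{I*}, δ_{I*}) = f(x) + λ ∑_{i∈I*} (|xᵢ| + δᵢ²)^p + (β/2) ∑_{i∈I*} (xᵢ − yᵢ)²`,
viewed as a smooth function on the Euclidean space indexed by three copies of `I*`
(the full vector `x` has `xᵢ = 0` for `i ∉ I*`). -/
def redPsi (n : ℕ) (p lam β : ℝ) (f : Vec n → ℝ) (Istar : Finset (Fin n))
    (z : EuclideanSpace ℝ (Idx3 Istar)) : ℝ :=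
  f (embedI Istar fun i => z (Sum.inl i))
    + lam * ∑ i : {i // i ∈ Istar}, (|z (Sum.inl i)| + (z (Sum.inr (Sum.inr i))) ^ 2) ^ p
    + β / 2 * ∑ i : {i // i ∈ Istar}, (z (Sum.inl i) - z (Sum.inr (Sum.inl i))) ^ 2

/-- The point `(x^k_{I*}, x^{k−1}_{I*}, δ^k_{I*})` with `δᵢᵏ = √εᵢᵏ`. -/
def zpt {n : ℕ} (Istar : Finset (Fin n)) (x : ℕ → Vec n) (ε : ℕ → Fin n → ℝ) (k : ℕ) :
    EuclideanSpace ℝ (Idx3 Istar) :=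
  WithLp.toLp 2 (Sum.elim (fun i => x k i.1)
    (Sum.elim (fun i => x (k - 1) i.1) (fun i => Real.sqrt (ε k i.1))))

/-- The point `(x*_{I*}, x*_{I*}, 0_{I*})` attached to a (cluster/limit) point `x*`. -/
def zstarPt {n : ℕ} (Istar : Finset (Fin n)) (xstar : Vec n) :
    EuclideanSpace ℝ (Idx3 Istar) :=
  WithLp.toLp 2 (Sum.elim (fun i => xstar i.1) (Sum.elim (fun i => xstar i.1) fun _ => 0))

/-- Euclidean norm of a vector restricted to the coordinates in `I*`. -/
def normOn {n : ℕ} (Istar : Finset (Fin n)) (v : Fin n → ℝ) : ℝ :=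
  Real.sqrt (∑ i ∈ Istar, v i ^ 2)

/-!
Each step of the algorithm decreases the merit function `ψ(xᵏ, xᵏ⁻¹, εᵏ)`: the descent lemma at
`yᵏ` and convexity of `f` bound `f(xᵏ⁺¹)` through the linearization at `yᵏ`, `β`-strong convexity
of the subproblem compares its minimizer `xᵏ⁺¹` with `xᵏ`, and concavity of `t ↦ tᵖ` shows that
the weighted ℓ₁ term majorizes the change of the penalty, while `‖xᵏ - yᵏ‖ = αᵏ‖xᵏ - xᵏ⁻¹‖`.
Once the support has settled on `I*`, the same computation restricted to `I*` gives the
`D₂`-decrease of the reduced merit function, which is bounded below because all iterates stay in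
the bounded level set. Hence it converges; the decrease forces `xᵏ - xᵏ⁻¹ → 0` on `I*` and
`εᵏ → 0`, so along a subsequence `(xᵏ_{I*}, xᵏ⁻¹_{I*}, δᵏ_{I*}) → (x*_{I*}, x*_{I*}, 0)`, and
continuity of the reduced merit function identifies its value there with the limit `ζ`.
-/

open Set Topology

section FirstOrder

variable {E : Type*} [NormedAddCommGroup E] [InnerProductSpace ℝ E] [CompleteSpace E] {f : E → ℝ}

theorem hasDerivAt_apply_add_smul {a v : E} {t : ℝ} (hf : DifferentiableAt ℝ f (a + t • v)) :
    HasDerivAt (fun s : ℝ => f (a + s • v)) ⟪gradient f (a + t • v), v⟫_ℝ t := by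
  have hline : HasDerivAt (fun s : ℝ => a + s • v) v t := by
    simpa using ((hasDerivAt_id t).smul_const v).const_add a
  exact hf.hasGradientAt.hasFDerivAt.comp_hasDerivAt t hline

theorem ConvexOn.add_inner_gradient_le (hconv : ConvexOn ℝ univ f) {a : E}
    (hf : DifferentiableAt ℝ f a) (b : E) :
    f a + ⟪gradient f a, b - a⟫_ℝ ≤ f b := by
  have hline : ConvexOn ℝ univ fun s : ℝ => f (a + s • (b - a)) := by
    simpa [Function.comp_def, AffineMap.lineMap_apply, add_comm] using
      hconv.comp_affineMap (AffineMap.lineMap a b)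
  have hd : HasDerivAt (fun s : ℝ => f (a + s • (b - a))) ⟪gradient f a, b - a⟫_ℝ 0 :=
    hasDerivAt_apply_add_smul (by simpa using hf) |>.congr_deriv (by simp)
  have := hline.deriv_le_slope (mem_univ 0) (mem_univ 1) one_pos hd.differentiableAt
  simp only [hd.deriv, slope_def_field, one_smul, zero_smul, add_zero, sub_zero, div_one,
    add_sub_cancel] at this
  linarith

theorem le_add_inner_gradient_add_sq_norm_of_lipschitz {L : ℝ} (hf : Differentiable ℝ f)
    (hL : ∀ u w, ‖gradient f u - gradient f w‖ ≤ L * ‖u - w‖) (a b : E) :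
    f b ≤ f a + ⟪gradient f a, b - a⟫_ℝ + L / 2 * ‖b - a‖ ^ 2 := by
  set v := b - a
  set g : ℝ → ℝ := fun s => f (a + s • v) - s * ⟪gradient f a, v⟫_ℝ - s ^ 2 * (L / 2 * ‖v‖ ^ 2)
  have hg : ∀ t, HasDerivAt g
      (⟪gradient f (a + t • v) - gradient f a, v⟫_ℝ - t * (L * ‖v‖ ^ 2)) t := by
    intro t
    have h1 := hasDerivAt_apply_add_smul (a := a) (v := v) (hf (a + t • v))
    have h2 := (hasDerivAt_id t).mul_const ⟪gradient f a, v⟫_ℝ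
    have h3 := (hasDerivAt_pow 2 t).mul_const (L / 2 * ‖v‖ ^ 2)
    exact ((h1.sub h2).sub h3).congr_deriv (by rw [inner_sub_left]; ring)
  have hderiv : ∀ t ∈ Ioo (0 : ℝ) 1, deriv g t ≤ 0 := by
    intro t ht
    have hlip : ‖gradient f (a + t • v) - gradient f a‖ ≤ L * (t * ‖v‖) := by
      simpa [norm_smul, abs_of_pos ht.1] using hL (a + t • v) a
    rw [(hg t).deriv, sub_nonpos]
    calc ⟪gradient f (a + t • v) - gradient f a, v⟫_ℝ
        ≤ ‖gradient f (a + t • v) - gradient f a‖ * ‖v‖ := real_inner_le_norm _ _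
      _ ≤ L * (t * ‖v‖) * ‖v‖ := by gcongr
      _ = t * (L * ‖v‖ ^ 2) := by ring
  have hanti : AntitoneOn g (Icc 0 1) :=
    antitoneOn_of_deriv_nonpos (convex_Icc 0 1)
      (fun t _ => (hg t).continuousAt.continuousWithinAt)
      (fun t _ => (hg t).differentiableAt.differentiableWithinAt)
      (by simpa only [interior_Icc] using hderiv)
  have := hanti (left_mem_Icc.2 zero_le_one) (right_mem_Icc.2 zero_le_one) zero_le_one
  simp only [g, v, one_smul, zero_smul, add_zero, add_sub_cancel, one_mul, one_pow, zero_mul,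
    sub_zero, ne_eq, OfNat.ofNat_ne_zero, not_false_eq_true, zero_pow] at this
  linarith

end FirstOrder

section StrongConvexity

variable {E : Type*} [NormedAddCommGroup E] [InnerProductSpace ℝ E]

theorem strongConvexOn_univ_sq_norm_sub (m : ℝ) (c : E) :
    StrongConvexOn univ m fun z => m / 2 * ‖z - c‖ ^ 2 := by
  rw [strongConvexOn_iff_convex]
  have haff : (fun z => m / 2 * ‖z - c‖ ^ 2 - m / 2 * ‖z‖ ^ 2)
      = fun z => (-m) • innerₛₗ ℝ c z + m / 2 * ‖c‖ ^ 2 := by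
    funext z
    rw [norm_sub_sq_real, innerₛₗ_apply_apply, real_inner_comm, smul_eq_mul]
    ring
  rw [haff]
  exact (((-m) • innerₛₗ ℝ c).convexOn convex_univ).add_const _

theorem ConvexOn.strongConvexOn_add_sq_norm_sub {h : E → ℝ} (hh : ConvexOn ℝ univ h)
    (m : ℝ) (c : E) : StrongConvexOn univ m fun z => h z + m / 2 * ‖z - c‖ ^ 2 := by
  have := (uniformConvexOn_zero.2 hh).add (strongConvexOn_univ_sq_norm_sub m c)
  rwa [zero_add] at this

theorem StrongConvexOn.add_sq_norm_sub_le_of_isMinOn {s : Set E} {m : ℝ} {f : E → ℝ}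
    (hf : StrongConvexOn s m f) {x : E} (hx : x ∈ s) (hmin : IsMinOn f s x) {z : E}
    (hz : z ∈ s) : f x + m / 2 * ‖z - x‖ ^ 2 ≤ f z := by
  have key : ∀ t ∈ Ioo (0 : ℝ) 1, f x + (1 - t) * (m / 2 * ‖z - x‖ ^ 2) ≤ f z := by
    rintro t ⟨ht0, ht1⟩
    have hcomb := hf.2 hx hz (sub_nonneg.2 ht1.le) ht0.le (sub_add_cancel 1 t)
    have hmin' : f x ≤ f ((1 - t) • x + t • z) :=
      hmin (hf.1 hx hz (sub_nonneg.2 ht1.le) ht0.le (sub_add_cancel 1 t))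
    rw [norm_sub_rev] at hcomb
    simp only [smul_eq_mul] at hcomb
    by_contra! hlt
    nlinarith [mul_lt_mul_of_pos_left hlt ht0]
  have hlim : Tendsto (fun t : ℝ => f x + (1 - t) * (m / 2 * ‖z - x‖ ^ 2)) (𝓝[>] 0)
      (𝓝 (f x + m / 2 * ‖z - x‖ ^ 2)) := by
    have hcont : Continuous fun t : ℝ => f x + (1 - t) * (m / 2 * ‖z - x‖ ^ 2) := by fun_prop
    simpa using (hcont.tendsto 0).mono_left nhdsWithin_le_nhds
  exact le_of_tendsto hlim (eventually_of_mem (Ioo_mem_nhdsGT one_pos) key)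

end StrongConvexity

theorem convexOn_univ_sum_mul_abs {ι : Type*} [Fintype ι] {w : ι → ℝ} (hw : ∀ i, 0 ≤ w i) :
    ConvexOn ℝ univ fun z : EuclideanSpace ℝ ι => ∑ i, w i * |z i| := by
  refine ⟨convex_univ, fun u _ v _ a b ha hb _ => ?_⟩
  simp only [smul_eq_mul, Finset.mul_sum, ← Finset.sum_add_distrib]
  refine Finset.sum_le_sum fun i _ => ?_
  have habs : |a * u i + b * v i| ≤ a * |u i| + b * |v i| := by
    simpa [abs_mul, abs_of_nonneg ha, abs_of_nonneg hb] using abs_add_le (a * u i) (b * v i)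
  calc w i * |(a • u + b • v) i| = w i * |a * u i + b * v i| := by simp
    _ ≤ w i * (a * |u i| + b * |v i|) := mul_le_mul_of_nonneg_left habs (hw i)
    _ = a * (w i * |u i|) + b * (w i * |v i|) := by ring

theorem Real.rpow_le_rpow_add_tangent {p a b : ℝ} (hp0 : 0 < p) (hp1 : p < 1) (ha : 0 < a)
    (hb : 0 ≤ b) : b ^ p ≤ a ^ p + p * a ^ (p - 1) * (b - a) := by
  have hs : (1 : ℝ) + (b - a) / a = b / a := by field_simp; ring
  have hbern := rpow_one_add_le_one_add_mul_self (show (-1 : ℝ) ≤ (b - a) / a by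
    rw [le_div_iff₀ ha]; linarith) hp0.le hp1.le
  rw [hs] at hbern
  calc b ^ p = a ^ p * (b / a) ^ p := by rw [Real.div_rpow hb ha.le]; field_simp
    _ ≤ a ^ p * (1 + p * ((b - a) / a)) := by gcongr
    _ = a ^ p + p * a ^ (p - 1) * (b - a) := by
      rw [Real.rpow_sub ha, Real.rpow_one]; field_simp

theorem exists_tendsto_of_antitone_of_le {a : ℕ → ℝ} {N : ℕ} {C : ℝ}
    (hanti : ∀ k ≥ N, a (k + 1) ≤ a k) (hC : ∀ k ≥ N, C ≤ a k) : ∃ ζ, Tendsto a atTop (𝓝 ζ) := by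
  have hb : Antitone fun j => a (j + N) :=
    antitone_nat_of_succ_le fun j => by simpa [add_right_comm] using hanti (j + N) (by omega)
  have hbdd : BddBelow (range fun j => a (j + N)) := ⟨C, by
    rintro _ ⟨j, rfl⟩
    exact hC (j + N) (by omega)⟩
  exact ⟨_, (tendsto_add_atTop_iff_nat N).1 (tendsto_atTop_ciInf hb hbdd)⟩

section Reduced

variable {n : ℕ}

theorem normOn_sq (I : Finset (Fin n)) (v : Fin n → ℝ) : normOn I v ^ 2 = ∑ i ∈ I, v i ^ 2 :=
  Real.sq_sqrt (Finset.sum_nonneg fun _ _ => sq_nonneg _)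

theorem abs_le_normOn {I : Finset (Fin n)} (v : Fin n → ℝ) {i : Fin n} (hi : i ∈ I) :
    |v i| ≤ normOn I v :=
  Real.abs_le_sqrt (Finset.single_le_sum (fun j _ => sq_nonneg (v j)) hi)

theorem tendsto_apply_of_sufficient_decrease {I : Finset (Fin n)} {a : ℕ → ℝ}
    {v : ℕ → Fin n → ℝ} {D ζ : ℝ} {N : ℕ} (hD : 0 < D)
    (hdec : ∀ k ≥ N, D * normOn I (v k) ^ 2 ≤ a k - a (k + 1)) (ha : Tendsto a atTop (𝓝 ζ))
    {i : Fin n} (hi : i ∈ I) : Tendsto (fun k => v k i) atTop (𝓝 0) := by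
  have hgap : Tendsto (fun k => (a k - a (k + 1)) / D) atTop (𝓝 0) := by
    simpa using (ha.sub ((tendsto_add_atTop_iff_nat 1).2 ha)).div_const D
  have hsq : Tendsto (fun k => normOn I (v k) ^ 2) atTop (𝓝 0) :=
    squeeze_zero' (Eventually.of_forall fun k => sq_nonneg _)
      ((eventually_ge_atTop N).mono fun k hk => (le_div_iff₀' hD).2 (hdec k hk)) hgap
  have hnorm : Tendsto (fun k => normOn I (v k)) atTop (𝓝 0) := by
    have := hsq.sqrt
    rw [Real.sqrt_zero] at this
    exact this.congr fun k => Real.sqrt_sq (Real.sqrt_nonneg _)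
  exact squeeze_zero_norm (fun k => abs_le_normOn (v k) hi) hnorm

theorem embedI_eq {I : Finset (Fin n)} {v : Vec n} (hv : ∀ i ∉ I, v i = 0) :
    embedI I (fun i => v i) = v := by
  ext i
  by_cases hi : i ∈ I
  · simp [embedI, hi]
  · simp [embedI, hi, hv i hi]

theorem sum_sq_sub_eq_norm_sq {I : Finset (Fin n)} {u v : Vec n} (hu : ∀ i ∉ I, u i = 0)
    (hv : ∀ i ∉ I, v i = 0) : ∑ i ∈ I, (u i - v i) ^ 2 = ‖u - v‖ ^ 2 := by
  rw [EuclideanSpace.norm_sq_eq]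
  refine Finset.sum_subset (Finset.subset_univ I) (fun i _ hi => by simp [hu i hi, hv i hi])
    |>.trans (by simp)

variable {p lam β : ℝ} {f : Vec n → ℝ} {I : Finset (Fin n)}

theorem redPsi_zpt {x : ℕ → Vec n} {ε : ℕ → Fin n → ℝ} {k : ℕ} (hx : ∀ i ∉ I, x k i = 0)
    (hε : ∀ i, 0 ≤ ε k i) :
    redPsi n p lam β f I (zpt I x ε k)
      = f (x k) + lam * ∑ i ∈ I, (|x k i| + ε k i) ^ p
        + β / 2 * ∑ i ∈ I, (x k i - x (k - 1) i) ^ 2 := by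
  simp only [redPsi, zpt, Sum.elim_inl, Sum.elim_inr, embedI_eq hx,
    Real.sq_sqrt (hε _)]
  rw [Finset.sum_coe_sort I (fun i => (|x k i| + ε k i) ^ p),
    Finset.sum_coe_sort I (fun i => (x k i - x (k - 1) i) ^ 2)]

theorem continuous_redPsi (hp : 0 < p) (hf : Continuous f) :
    Continuous (redPsi n p lam β f I) := by
  have hembed :
      Continuous fun z : EuclideanSpace ℝ (Idx3 I) => embedI I fun i => z (Sum.inl i) := by
    refine (PiLp.continuous_toLp 2 _).comp (continuous_pi fun i => ?_)
    by_cases hi : i ∈ I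
    · simpa [hi] using (PiLp.continuous_apply 2 _ (Sum.inl ⟨i, hi⟩ : Idx3 I))
    · simpa [hi] using continuous_const
  unfold redPsi
  refine ((hf.comp hembed).add (continuous_const.mul (continuous_finsetSum _ fun i _ => ?_))).add
    (by fun_prop)
  exact (by fun_prop : Continuous fun z : EuclideanSpace ℝ (Idx3 I) =>
    |z (Sum.inl i)| + z (Sum.inr (Sum.inr i)) ^ 2).rpow_const fun _ => Or.inr hp.le

theorem tendsto_zpt_comp {x : ℕ → Vec n} {ε : ℕ → Fin n → ℝ} {φ : ℕ → ℕ} {xstar : Vec n}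
    (hφ : Tendsto φ atTop atTop) (hx : Tendsto (fun j => x (φ j)) atTop (𝓝 xstar))
    (hdiff : ∀ i ∈ I, Tendsto (fun k => x k i - x (k - 1) i) atTop (𝓝 0))
    (hε : ∀ i, Tendsto (fun k => ε k i) atTop (𝓝 0)) :
    Tendsto (fun j => zpt I x ε (φ j)) atTop (𝓝 (zstarPt I xstar)) := by
  have hcoord (i : Fin n) : Tendsto (fun j => x (φ j) i) atTop (𝓝 (xstar i)) :=
    ((PiLp.continuous_apply 2 _ i).tendsto xstar).comp hx
  refine ((PiLp.continuous_toLp 2 _).tendsto _).comp (tendsto_pi_nhds.2 ?_)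
  rintro (i | i | i)
  · exact hcoord i
  · simpa using (hcoord i).sub ((hdiff i i.2).comp hφ)
  · simpa using ((hε i).comp hφ).sqrt

end Reduced

namespace EIRL1

variable {n : ℕ} {p lam β Lf μ αbar : ℝ} {f : Vec n → ℝ} {x y : ℕ → Vec n}
  {ε : ℕ → Fin n → ℝ} {α : ℕ → ℝ}

theorem beta_pos (H : EIRL1 n p lam β Lf μ αbar f x y ε α) : 0 < β := H.hLf.trans_lt H.hβ

theorem eps_pos (H : EIRL1 n p lam β Lf μ αbar f x y ε α) (k : ℕ) (i : Fin n) : 0 < ε k i := by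
  cases k with
  | zero => exact H.hε0 i
  | succ k => exact H.hεpos k i

theorem eps_succ_le (H : EIRL1 n p lam β Lf μ αbar f x y ε α) (k : ℕ) (i : Fin n) :
    ε (k + 1) i ≤ ε k i :=
  (H.hεdec k i).trans (mul_le_of_le_one_left (H.eps_pos k i).le H.hμ1.le)

theorem tendsto_eps (H : EIRL1 n p lam β Lf μ αbar f x y ε α) (i : Fin n) :
    Tendsto (fun k => ε k i) atTop (𝓝 0) := by
  have hgeom (k : ℕ) : ε k i ≤ ε 0 i * μ ^ k := by
    induction k with
    | zero => simp
    | succ k ih =>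
      calc ε (k + 1) i ≤ μ * ε k i := H.hεdec k i
        _ ≤ μ * (ε 0 i * μ ^ k) := mul_le_mul_of_nonneg_left ih H.hμ0.le
        _ = ε 0 i * μ ^ (k + 1) := by ring
  refine squeeze_zero (fun k => (H.eps_pos k i).le) hgeom ?_
  simpa using (tendsto_pow_atTop_nhds_zero_of_lt_one H.hμ0.le H.hμ1).const_mul (ε 0 i)

theorem sq_norm_sub_extrapolation (H : EIRL1 n p lam β Lf μ αbar f x y ε α) (k : ℕ) :
    ‖x k - y k‖ ^ 2 = α k ^ 2 * ‖x k - x (k - 1)‖ ^ 2 := by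
  rw [H.hy k, sub_add_cancel_left, norm_neg, norm_smul, mul_pow, Real.norm_eq_abs, sq_abs]

theorem subObj_strongConvexOn (H : EIRL1 n p lam β Lf μ αbar f x y ε α) (k : ℕ) :
    StrongConvexOn univ β (subObj n p lam β f (x k) (y k) (ε k)) := by
  have hw (i : Fin n) : 0 ≤ p * (|x k i| + ε k i) ^ (p - 1) :=
    mul_nonneg H.hp0.le (Real.rpow_nonneg (add_nonneg (abs_nonneg _) (H.eps_pos k i).le) _)
  have hconv : ConvexOn ℝ univ fun z : Vec n =>
      ⟪gradient f (y k), z⟫_ℝ + lam • ∑ i, p * (|x k i| + ε k i) ^ (p - 1) * |z i| :=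
    ((innerₛₗ ℝ (gradient f (y k))).convexOn convex_univ).add
      ((convexOn_univ_sum_mul_abs hw).smul H.hlam.le)
  have hsplit : subObj n p lam β f (x k) (y k) (ε k) = fun z =>
      (⟪gradient f (y k), z⟫_ℝ + lam • ∑ i, p * (|x k i| + ε k i) ^ (p - 1) * |z i|)
        + β / 2 * ‖z - y k‖ ^ 2 := by
    funext z
    simp only [subObj, smul_eq_mul]
    ring
  rw [hsplit]
  exact hconv.strongConvexOn_add_sq_norm_sub β (y k)

theorem subObj_add_sq_norm_le (H : EIRL1 n p lam β Lf μ αbar f x y ε α) (k : ℕ) (z : Vec n) :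
    subObj n p lam β f (x k) (y k) (ε k) (x (k + 1)) + β / 2 * ‖z - x (k + 1)‖ ^ 2
      ≤ subObj n p lam β f (x k) (y k) (ε k) z := by
  refine (H.subObj_strongConvexOn k).add_sq_norm_sub_le_of_isMinOn (mem_univ _)
    (isMinOn_univ_iff.2 fun z => ?_) (mem_univ z)
  rcases eq_or_ne z (x (k + 1)) with rfl | hz
  exacts [le_rfl, (H.hmin k z hz).le]

theorem penalty_step_le (H : EIRL1 n p lam β Lf μ αbar f x y ε α) (k : ℕ) (S : Finset (Fin n)) :
    ∑ i ∈ S, (|x (k + 1) i| + ε (k + 1) i) ^ p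
      ≤ ∑ i ∈ S, (|x k i| + ε k i) ^ p
        + (∑ i ∈ S, p * (|x k i| + ε k i) ^ (p - 1) * |x (k + 1) i|
          - ∑ i ∈ S, p * (|x k i| + ε k i) ^ (p - 1) * |x k i|) := by
  rw [← Finset.sum_sub_distrib, ← Finset.sum_add_distrib]
  refine Finset.sum_le_sum fun i _ => ?_
  have hpos : 0 < |x k i| + ε k i := add_pos_of_nonneg_of_pos (abs_nonneg _) (H.eps_pos k i)
  have hw : 0 ≤ p * (|x k i| + ε k i) ^ (p - 1) := mul_nonneg H.hp0.le (Real.rpow_nonneg hpos.le _)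
  calc (|x (k + 1) i| + ε (k + 1) i) ^ p
      ≤ (|x k i| + ε k i) ^ p
        + p * (|x k i| + ε k i) ^ (p - 1) * (|x (k + 1) i| + ε (k + 1) i - (|x k i| + ε k i)) :=
        Real.rpow_le_rpow_add_tangent H.hp0 H.hp1 hpos
          (add_nonneg (abs_nonneg _) (H.eps_pos _ i).le)
    _ ≤ (|x k i| + ε k i) ^ p + p * (|x k i| + ε k i) ^ (p - 1) * (|x (k + 1) i| - |x k i|) := by
        have := mul_le_mul_of_nonneg_left
          (show |x (k + 1) i| + ε (k + 1) i - (|x k i| + ε k i) ≤ |x (k + 1) i| - |x k i| by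
            linarith [H.eps_succ_le k i]) hw
        linarith
    _ = _ := by ring

theorem merit_succ_le_of_support (H : EIRL1 n p lam β Lf μ αbar f x y ε α) (k : ℕ)
    (S : Finset (Fin n)) (hS : ∀ i ∉ S, x k i = 0 ∧ x (k + 1) i = 0) :
    f (x (k + 1)) + lam * ∑ i ∈ S, (|x (k + 1) i| + ε (k + 1) i) ^ p
        + β / 2 * ‖x (k + 1) - x k‖ ^ 2
      ≤ f (x k) + lam * ∑ i ∈ S, (|x k i| + ε k i) ^ p
        + β * α k ^ 2 / 2 * ‖x k - x (k - 1)‖ ^ 2 := by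
  have hrestrict (v : Vec n) (hv : ∀ i ∉ S, v i = 0) :
      ∑ i, p * (|x k i| + ε k i) ^ (p - 1) * |v i|
        = ∑ i ∈ S, p * (|x k i| + ε k i) ^ (p - 1) * |v i| :=
    (Finset.sum_subset (Finset.subset_univ S) fun i _ hi => by simp [hv i hi]).symm
  have hsub := H.subObj_add_sq_norm_le k (x k)
  simp only [subObj, hrestrict (x k) fun i hi => (hS i hi).1,
    hrestrict (x (k + 1)) fun i hi => (hS i hi).2, H.sq_norm_sub_extrapolation k,
    norm_sub_rev (x k) (x (k + 1))] at hsub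
  have hdiff := H.hdiff.differentiable one_ne_zero
  have hdescent := le_add_inner_gradient_add_sq_norm_of_lipschitz hdiff H.hlip (y k) (x (k + 1))
  have hconvex := H.hconv.add_inner_gradient_le (hdiff (y k)) (x k)
  have hpenalty := mul_le_mul_of_nonneg_left (H.penalty_step_le k S) H.hlam.le
  have hLβ : Lf / 2 * ‖x (k + 1) - y k‖ ^ 2 ≤ β / 2 * ‖x (k + 1) - y k‖ ^ 2 := by
    gcongr
    exact H.hβ.le
  rw [inner_sub_right] at hdescent hconvex
  rw [mul_add, mul_sub] at hpenalty
  linarith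

theorem psiObj_succ_le (H : EIRL1 n p lam β Lf μ αbar f x y ε α) (k : ℕ) :
    psiObj n p lam β f (x (k + 1)) (x k) (ε (k + 1))
      ≤ psiObj n p lam β f (x k) (x (k - 1)) (ε k) := by
  have hstep := H.merit_succ_le_of_support k Finset.univ (by simp)
  have hα : β * α k ^ 2 ≤ β :=
    mul_le_of_le_one_right H.beta_pos.le (pow_le_one₀ (H.hα0 k) ((H.hα1 k).trans H.hαbar1.le))
  have := mul_le_mul_of_nonneg_right hα (sq_nonneg ‖x k - x (k - 1)‖)
  simp only [psiObj, Fobj]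
  linarith

theorem Fobj_zero_le (H : EIRL1 n p lam β Lf μ αbar f x y ε α) (k : ℕ) :
    Fobj n p lam f (x k) 0 ≤ Fobj n p lam f (x 0) (ε 0) :=
  calc Fobj n p lam f (x k) 0 ≤ Fobj n p lam f (x k) (ε k) := by
        simp only [Fobj, Pi.zero_apply, add_zero]
        gcongr with i
        · exact H.hlam.le
        · exact H.hp0.le
        · linarith [H.eps_pos k i]
    _ ≤ psiObj n p lam β f (x k) (x (k - 1)) (ε k) :=
        le_add_of_nonneg_right (by have := H.beta_pos; positivity)
    _ ≤ psiObj n p lam β f (x 0) (x (0 - 1)) (ε 0) :=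
        antitone_nat_of_succ_le (f := fun k => psiObj n p lam β f (x k) (x (k - 1)) (ε k))
          H.psiObj_succ_le (Nat.zero_le k)
    _ = Fobj n p lam f (x 0) (ε 0) := by simp [psiObj]

theorem bddBelow_range_f (H : EIRL1 n p lam β Lf μ αbar f x y ε α) :
    BddBelow (range fun k => f (x k)) :=
  (H.hlevel.isCompact_closure.bddBelow_image H.hdiff.continuous.continuousOn).mono <| by
    rintro _ ⟨k, rfl⟩
    exact ⟨x k, subset_closure (H.Fobj_zero_le k), rfl⟩

variable {K : ℕ} {I : Finset (Fin n)}

theorem redPsi_sufficient_decrease (H : EIRL1 n p lam β Lf μ αbar f x y ε α)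
    (hvan : ∀ k > K, ∀ i ∉ I, x k i = 0) {k : ℕ} (hk : K + 2 ≤ k) :
    β * (1 - αbar ^ 2) / 2 * normOn I (fun i => x k i - x (k - 1) i) ^ 2
      ≤ redPsi n p lam β f I (zpt I x ε k) - redPsi n p lam β f I (zpt I x ε (k + 1)) := by
  have hvan_prev := hvan (k - 1) (by omega)
  have hvan_k := hvan k (by omega)
  have hvan_succ := hvan (k + 1) (by omega)
  have hstep := H.merit_succ_le_of_support k I fun i hi => ⟨hvan_k i hi, hvan_succ i hi⟩
  have hα : α k ^ 2 ≤ αbar ^ 2 := pow_le_pow_left₀ (H.hα0 k) (H.hα1 k) 2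
  have := mul_le_mul_of_nonneg_right (mul_le_mul_of_nonneg_left hα H.beta_pos.le)
    (sq_nonneg ‖x k - x (k - 1)‖)
  rw [redPsi_zpt hvan_k fun i => (H.eps_pos k i).le,
    redPsi_zpt hvan_succ fun i => (H.eps_pos (k + 1) i).le, normOn_sq,
    sum_sq_sub_eq_norm_sq hvan_k hvan_prev, Nat.add_sub_cancel,
    sum_sq_sub_eq_norm_sq hvan_succ hvan_k]
  linarith

theorem exists_le_redPsi (H : EIRL1 n p lam β Lf μ αbar f x y ε α)
    (hvan : ∀ k > K, ∀ i ∉ I, x k i = 0) :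
    ∃ C, ∀ k > K, C ≤ redPsi n p lam β f I (zpt I x ε k) := by
  obtain ⟨C, hC⟩ := H.bddBelow_range_f
  refine ⟨C, fun k hk => ?_⟩
  rw [redPsi_zpt (hvan k hk) fun i => (H.eps_pos k i).le]
  have hpen : 0 ≤ lam * ∑ i ∈ I, (|x k i| + ε k i) ^ p :=
    mul_nonneg H.hlam.le (Finset.sum_nonneg fun i _ =>
      Real.rpow_nonneg (add_nonneg (abs_nonneg _) (H.eps_pos k i).le) _)
  have hprox : 0 ≤ β / 2 * ∑ i ∈ I, (x k i - x (k - 1) i) ^ 2 :=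
    mul_nonneg (half_pos H.beta_pos).le (Finset.sum_nonneg fun _ _ => sq_nonneg _)
  linarith [hC ⟨k, rfl⟩]

theorem redPsi_zstarPt_eq_of_mapClusterPt (H : EIRL1 n p lam β Lf μ αbar f x y ε α) {ζ : ℝ}
    (hζ : Tendsto (fun k => redPsi n p lam β f I (zpt I x ε k)) atTop (𝓝 ζ))
    (hdiff : ∀ i ∈ I, Tendsto (fun k => x k i - x (k - 1) i) atTop (𝓝 0))
    {xstar : Vec n} (hcl : MapClusterPt xstar atTop x) :
    redPsi n p lam β f I (zstarPt I xstar) = ζ := by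
  obtain ⟨φ, hφ, hxφ⟩ := hcl.tendsto_subseq
  have hz := tendsto_zpt_comp hφ.tendsto_atTop hxφ hdiff H.tendsto_eps
  exact tendsto_nhds_unique
    (((continuous_redPsi H.hp0 H.hdiff.continuous).tendsto _).comp hz)
    (hζ.comp hφ.tendsto_atTop)

end EIRL1

/-- Lemma 3.2(ii)–(iii): with `D₂ = β(1 − ᾱ²)/2 > 0`, the values of the reduced
merit function decrease monotonically (with a `D₂`-sufficient decrease) for all
sufficiently large `k`, converge to a limit `ζ`, and
`ψ(x*_{I*}, x*_{I*}, 0_{I*}) = ζ` at every cluster point `x*` of `{xᵏ}`. -/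
theorem stmt_16 (n : ℕ) (p lam β Lf μ αbar : ℝ) (f : Vec n → ℝ)
    (x y : ℕ → Vec n) (ε : ℕ → Fin n → ℝ) (α : ℕ → ℝ)
    (H : EIRL1 n p lam β Lf μ αbar f x y ε α)
    (K : ℕ) (Istar : Finset (Fin n))
    (hsupp : ∀ k > K, ∀ i, i ∈ Istar ↔ x k i ≠ 0) :
    (0 : ℝ) < β * (1 - αbar ^ 2) / 2 ∧
    (∃ N : ℕ, ∀ k ≥ N,
      redPsi n p lam β f Istar (zpt Istar x ε (k + 1))
          ≤ redPsi n p lam β f Istar (zpt Istar x ε k) ∧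
      redPsi n p lam β f Istar (zpt Istar x ε k)
          - redPsi n p lam β f Istar (zpt Istar x ε (k + 1))
        ≥ β * (1 - αbar ^ 2) / 2 * (normOn Istar (fun i => x k i - x (k - 1) i)) ^ 2) ∧
    ∃ ζ : ℝ,
      Tendsto (fun k => redPsi n p lam β f Istar (zpt Istar x ε k)) atTop (nhds ζ) ∧
      ∀ xstar : Vec n, MapClusterPt xstar atTop x →
        redPsi n p lam β f Istar (zstarPt Istar xstar) = ζ := by
  have hvan : ∀ k > K, ∀ i ∉ Istar, x k i = 0 := fun k hk i hi =>
    not_not.1 (mt (hsupp k hk i).2 hi)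
  have hD : (0 : ℝ) < β * (1 - αbar ^ 2) / 2 := by
    have := pow_lt_one₀ H.hαbar0 H.hαbar1 two_ne_zero
    have := H.beta_pos
    positivity
  have hdec (k : ℕ) (hk : k ≥ K + 2) := H.redPsi_sufficient_decrease hvan hk
  have hmono (k : ℕ) (hk : k ≥ K + 2) :
      redPsi n p lam β f Istar (zpt Istar x ε (k + 1))
        ≤ redPsi n p lam β f Istar (zpt Istar x ε k) :=
    sub_nonneg.1 ((mul_nonneg hD.le (sq_nonneg _)).trans (hdec k hk))
  obtain ⟨C, hC⟩ := H.exists_le_redPsi hvan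
  obtain ⟨ζ, hζ⟩ := exists_tendsto_of_antitone_of_le hmono fun k hk => hC k (by omega)
  refine ⟨hD, ⟨K + 2, fun k hk => ⟨hmono k hk, hdec k hk⟩⟩, ζ, hζ, fun xstar hcl => ?_⟩
  exact H.redPsi_zstarPt_eq_of_mapClusterPt hζ
    (fun i hi => tendsto_apply_of_sufficient_decrease hD hdec hζ hi) hcl
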